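/- arXiv:1405.5959 — 3 statements merged into one kernel-verified Lean document; each statement's English description precedes it below -/
import Mathlib

section
/- Let a, γ, δ, ε, q be real numbers with γ < 1, let N be a natural number, and let (a_n)_{n ≥ 0} be real numbers such that a_n = 0 for all n > N and such that for every integer n ≥ 0 (with the convention a_{−1} = a_{−2} = 0): a·n(n−γ)·a_n + [ −a(n−1)(n−γ−δ) − (n−1+ε)(n−γ) − q ]·a_{n−1} + (n−γ−δ)(n−2+ε)·a_{n−2} = 0. Then the finite sum u(z) = Σ_{n=0}^{N} a_n B_z(1−γ+n, 1−δ) satisfies, at every z ∈ (0,1) with z ≠ a, the general Heun equation with αβ = 0: u''(z) + (γ/z + δ/(z−1) + ε/(z−a)) u'(z) − q/(z(z−1)(z−a)) u(z) = 0. -/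
/-- The incomplete Beta function `B_z(p,q) = ∫_0^z t^(p-1) (1-t)^(q-1) dt`. -/
noncomputable def incBeta (p q z : ℝ) : ℝ :=
  ∫ t in (0:ℝ)..z, t ^ (p - 1) * (1 - t) ^ (q - 1)

open Real Set Polynomial Filter Topology

/-! With `w(t) = t^(-γ) (1-t)^(-δ)` and `P = Σ cₙ Xⁿ`, the sum is `u(z) = ∫₀^z w P`, so `u' = w P`;
as `w'/w = -γ/z - δ/(z-1)`, the Heun equation multiplied by `z(z-1)(z-a)` becomes
`q u = z(z-1) w Q` with `Q = (z-a) P' + ε P`. The derivative of `z(z-1) w Q` is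
`w · (z(z-1) Q' + ((1-γ)(z-1) + (1-δ) z) Q)`, and the three-term recurrence says exactly that this
polynomial is `q P`. Since `z(z-1) w(z) = -z^(1-γ) (1-z)^(1-δ)` vanishes at `0` for `γ < 1`, the
fundamental theorem of calculus gives `q u = z(z-1) w Q`. -/

noncomputable def betaWeight (γ δ t : ℝ) : ℝ := t ^ (-γ) * (1 - t) ^ (-δ)

lemma hasDerivAt_rpow_mul_one_sub_rpow (s r : ℝ) {t : ℝ} (ht : t ∈ Ioo (0:ℝ) 1) :
    HasDerivAt (fun x => x ^ s * (1 - x) ^ r) (t ^ s * (1 - t) ^ r * (s / t - r / (1 - t))) t := by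
  have ht0 : t ≠ 0 := ht.1.ne'
  have h1t : 1 - t ≠ 0 := (sub_pos.2 ht.2).ne'
  have hl := hasDerivAt_rpow_const (p := s) (Or.inl ht0)
  have hr := (hasDerivAt_rpow_const (p := r) (Or.inl h1t)).comp t ((hasDerivAt_id t).const_sub 1)
  refine (hl.mul hr).congr_deriv ?_
  rw [Function.comp_apply, rpow_sub_one ht0, rpow_sub_one h1t]
  field_simp
  ring

lemma mul_one_sub_mul_betaWeight (γ δ : ℝ) {t : ℝ} (ht : t ∈ Ioo (0:ℝ) 1) :
    t * (1 - t) * betaWeight γ δ t = t ^ (1 - γ) * (1 - t) ^ (1 - δ) := by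
  rw [betaWeight, sub_eq_add_neg 1 γ, sub_eq_add_neg 1 δ, rpow_add ht.1, rpow_add (sub_pos.2 ht.2),
    rpow_one, rpow_one]
  ring

lemma continuousOn_betaWeight_mul_eval (γ δ : ℝ) (P : ℝ[X]) :
    ContinuousOn (fun t => betaWeight γ δ t * P.eval t) (Ioo 0 1) := by
  refine ContinuousOn.mul (ContinuousOn.mul ?_ ?_) P.continuous.continuousOn
  · exact continuousOn_id.rpow_const fun t ht => Or.inl ht.1.ne'
  · exact ContinuousOn.rpow_const (f := fun t => 1 - t) (continuousOn_const.sub continuousOn_id)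
      fun t ht => Or.inl (sub_pos.2 ht.2).ne'

lemma intervalIntegrable_betaWeight_mul_eval {γ z : ℝ} (hγ : γ < 1) (hz : z < 1) (δ : ℝ)
    (P : ℝ[X]) :
    IntervalIntegrable (fun t => betaWeight γ δ t * P.eval t) MeasureTheory.volume 0 z := by
  have hcont : ContinuousOn (fun t => (1 - t) ^ (-δ) * P.eval t) (uIcc 0 z) := by
    refine ContinuousOn.mul ?_ P.continuous.continuousOn
    exact ContinuousOn.rpow_const (f := fun t => 1 - t) (continuousOn_const.sub continuousOn_id)
      fun t ht => Or.inl (sub_pos.2 (ht.2.trans_lt (max_lt one_pos hz))).ne'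
  simpa only [betaWeight, mul_assoc] using
    (intervalIntegral.intervalIntegrable_rpow' (by linarith : -1 < -γ)).mul_continuousOn hcont

lemma hasDerivAt_integral_betaWeight_mul_eval {γ z : ℝ} (hγ : γ < 1) (hz : z ∈ Ioo (0:ℝ) 1)
    (δ : ℝ) (P : ℝ[X]) :
    HasDerivAt (fun x => ∫ t in (0:ℝ)..x, betaWeight γ δ t * P.eval t)
      (betaWeight γ δ z * P.eval z) z := by
  have hcont := continuousOn_betaWeight_mul_eval γ δ P
  exact intervalIntegral.integral_hasDerivAt_right
    (intervalIntegrable_betaWeight_mul_eval hγ hz.2 δ P)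
    (hcont.stronglyMeasurableAtFilter isOpen_Ioo z hz)
    (hcont.continuousAt (isOpen_Ioo.mem_nhds hz))

lemma sum_mul_incBeta_eq_integral_betaWeight_mul_eval {γ z : ℝ} (hγ : γ < 1)
    (hz : z ∈ Ioo (0:ℝ) 1) (δ : ℝ) (s : Finset ℕ) (c : ℕ → ℝ) :
    ∑ n ∈ s, c n * incBeta (1 - γ + n) (1 - δ) z
      = ∫ t in (0:ℝ)..z, betaWeight γ δ t * (∑ n ∈ s, C (c n) * X ^ n).eval t := by
  have hterm : ∀ n : ℕ, c n * incBeta (1 - γ + n) (1 - δ) z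
      = ∫ t in (0:ℝ)..z, betaWeight γ δ t * (C (c n) * X ^ n).eval t := by
    intro n
    rw [incBeta, ← intervalIntegral.integral_const_mul]
    refine intervalIntegral.integral_congr_ae (MeasureTheory.ae_of_all _ fun t ht => ?_)
    rw [uIoc_of_le hz.1.le] at ht
    rw [show 1 - γ + n - 1 = -γ + n by ring, sub_sub_cancel_left, rpow_add ht.1, rpow_natCast,
      betaWeight, eval_mul, eval_C, eval_pow, eval_X]
    ring
  simp_rw [hterm, eval_finsetSum, Finset.mul_sum]
  exact (intervalIntegral.integral_finsetSum fun n _ =>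
    intervalIntegrable_betaWeight_mul_eval hγ hz.2 δ _).symm

lemma integral_betaWeight_mul_eval_eq {γ z : ℝ} (hγ : γ < 1) (hz : z ∈ Ioo (0:ℝ) 1) (δ : ℝ)
    {P Q : ℝ[X]}
    (hPQ : X * (X - 1) * derivative Q + (C (1 - γ) * (X - 1) + C (1 - δ) * X) * Q = P) :
    ∫ t in (0:ℝ)..z, betaWeight γ δ t * P.eval t = z * (z - 1) * betaWeight γ δ z * Q.eval z := by
  -- the primitive `z (z - 1) w(z) Q(z)`, written so that it is visibly continuous at `0`
  set F : ℝ → ℝ := fun t => -(t ^ (1 - γ) * (1 - t) ^ (1 - δ) * Q.eval t)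
  have hF : ∀ t ∈ Ioo 0 z, HasDerivAt F (betaWeight γ δ t * P.eval t) t := by
    intro t ht
    have ht1 : t ∈ Ioo (0:ℝ) 1 := ⟨ht.1, ht.2.trans hz.2⟩
    refine ((hasDerivAt_rpow_mul_one_sub_rpow (1 - γ) (1 - δ) ht1).fun_mul
      (Q.hasDerivAt t)).neg.congr_deriv ?_
    have ht0 : t ≠ 0 := ht1.1.ne'
    have h1t : 1 - t ≠ 0 := (sub_pos.2 ht1.2).ne'
    rw [← mul_one_sub_mul_betaWeight γ δ ht1, ← hPQ]
    simp only [eval_add, eval_mul, eval_sub, eval_X, eval_C, eval_one]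
    field_simp
    ring
  have hcont : ContinuousOn F (Icc 0 z) := by
    refine (ContinuousOn.mul (ContinuousOn.mul ?_ ?_) Q.continuous.continuousOn).neg
    · exact continuousOn_id.rpow_const fun _ _ => Or.inr (sub_nonneg.2 hγ.le)
    · exact ContinuousOn.rpow_const (f := fun t => 1 - t) (continuousOn_const.sub continuousOn_id)
        fun t ht => Or.inl (sub_pos.2 (ht.2.trans_lt hz.2)).ne'
  rw [intervalIntegral.integral_eq_sub_of_hasDerivAt_of_le hz.1.le hcont hF
    (intervalIntegrable_betaWeight_mul_eval hγ hz.2 δ P)]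
  simp only [F, zero_rpow (sub_pos.2 hγ).ne', ← mul_one_sub_mul_betaWeight γ δ hz]
  ring

lemma heun_polynomial_identity_of_coeff_recurrence {a γ δ ε q : ℝ} {P : ℝ[X]}
    (hrec : ∀ n : ℕ,
      a * (n : ℝ) * ((n : ℝ) - γ) * P.coeff n
        + (-a * ((n : ℝ) - 1) * ((n : ℝ) - γ - δ) - ((n : ℝ) - 1 + ε) * ((n : ℝ) - γ) - q) *
            (if 1 ≤ n then P.coeff (n - 1) else 0)
        + (((n : ℝ) - γ - δ) * ((n : ℝ) - 2 + ε)) * (if 2 ≤ n then P.coeff (n - 2) else 0) = 0) :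
    X * (X - 1) * derivative ((X - C a) * derivative P + C ε * P)
      + (C (1 - γ) * (X - 1) + C (1 - δ) * X) * ((X - C a) * derivative P + C ε * P)
      = C q * P := by
  set Q := (X - C a) * derivative P + C ε * P with hQdef
  have hQ : ∀ n : ℕ, Q.coeff n = (n + ε) * P.coeff n - a * (n + 1) * P.coeff (n + 1) := by
    intro n
    have hQexp : Q = X * derivative P - C a * derivative P + C ε * P := by rw [hQdef]; ring
    rw [hQexp]
    rcases n with _ | n <;>
      simp only [coeff_add, coeff_sub, coeff_C_mul, coeff_X_mul, coeff_X_mul_zero,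
        coeff_derivative] <;> push_cast <;> ring
  have hL : X * (X - 1) * derivative Q + (C (1 - γ) * (X - 1) + C (1 - δ) * X) * Q
      = X * (X * derivative Q - derivative Q + C (2 - γ - δ) * Q) - C (1 - γ) * Q := by
    simp only [map_sub, C_1, map_ofNat]; ring
  rw [hL]
  -- coefficient `n` is the recurrence at `n + 1`
  ext (_ | _ | n) <;>
    simp only [coeff_add, coeff_sub, coeff_C_mul, coeff_X_mul, coeff_X_mul_zero,
        coeff_derivative, hQ, zero_add, Nat.reduceAdd]
  · have h := hrec 1
    norm_num at h
    linear_combination h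
  · have h := hrec 2
    norm_num at h
    linear_combination h
  · have h := hrec (n + 3)
    simp only [le_add_iff_nonneg_left, zero_le, if_true] at h
    push_cast at h ⊢
    simp only [add_assoc, Nat.reduceAdd] at h ⊢
    linear_combination h

lemma heun_of_hasDerivAt_betaWeight_mul_eval {U : ℝ → ℝ} {P : ℝ[X]} {a γ δ ε q z : ℝ}
    (hz : z ∈ Ioo (0:ℝ) 1) (hza : z ≠ a)
    (hU : ∀ t ∈ Ioo (0:ℝ) 1, HasDerivAt U (betaWeight γ δ t * P.eval t) t)
    (hqU : q * U z
      = z * (z - 1) * betaWeight γ δ z * ((X - C a) * derivative P + C ε * P).eval z) :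
    DifferentiableAt ℝ U z ∧ DifferentiableAt ℝ (deriv U) z ∧
      deriv (deriv U) z + (γ / z + δ / (z - 1) + ε / (z - a)) * deriv U z
        - q / (z * (z - 1) * (z - a)) * U z = 0 := by
  have hderiv : deriv U =ᶠ[𝓝 z] fun t => betaWeight γ δ t * P.eval t :=
    eventually_of_mem (isOpen_Ioo.mem_nhds hz) fun t ht => (hU t ht).deriv
  have hw : HasDerivAt (betaWeight γ δ) (betaWeight γ δ z * (-γ / z - -δ / (1 - z))) z :=
    hasDerivAt_rpow_mul_one_sub_rpow (-γ) (-δ) hz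
  have hwP := hw.fun_mul (P.hasDerivAt z)
  refine ⟨(hU z hz).differentiableAt, hderiv.differentiableAt_iff.mpr hwP.differentiableAt, ?_⟩
  have hz0 : z ≠ 0 := hz.1.ne'
  have hz1 : z - 1 ≠ 0 := (sub_neg.2 hz.2).ne
  have hz1' : 1 - z ≠ 0 := (sub_pos.2 hz.2).ne'
  have hza' : z - a ≠ 0 := sub_ne_zero.2 hza
  rw [hderiv.deriv_eq, hwP.deriv, (hU z hz).deriv, div_mul_eq_mul_div, hqU]
  simp only [eval_add, eval_mul, eval_sub, eval_X, eval_C]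
  field_simp
  ring

/-- Let `a, γ, δ, ε, q` be real with `γ < 1`, let `N : ℕ`, and let `(c_n)` be reals with
`c_n = 0` for `n > N` satisfying, for every `n ≥ 0` with the convention `c_{-1} = c_{-2} = 0`,
`a n(n−γ) c_n + [−a(n−1)(n−γ−δ) − (n−1+ε)(n−γ) − q] c_{n−1} + (n−γ−δ)(n−2+ε) c_{n−2} = 0`.
Then `u(z) = Σ_{n=0}^{N} c_n B_z(1−γ+n, 1−δ)` satisfies, at every `z ∈ (0,1)` with `z ≠ a`,
the general Heun equation with `αβ = 0`:
`u'' + (γ/z + δ/(z−1) + ε/(z−a)) u' − q/(z(z−1)(z−a)) u = 0`. -/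
theorem heun_incBeta_finite_sum_solution (a γ δ ε q : ℝ) (hγ : γ < 1) (N : ℕ) (c : ℕ → ℝ)
    (hvanish : ∀ n : ℕ, N < n → c n = 0)
    (hrec : ∀ n : ℕ,
      a * (n : ℝ) * ((n : ℝ) - γ) * c n
        + (-a * ((n : ℝ) - 1) * ((n : ℝ) - γ - δ) - ((n : ℝ) - 1 + ε) * ((n : ℝ) - γ) - q) *
            (if 1 ≤ n then c (n - 1) else 0)
        + (((n : ℝ) - γ - δ) * ((n : ℝ) - 2 + ε)) * (if 2 ≤ n then c (n - 2) else 0) = 0) :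
    ∀ z ∈ Set.Ioo (0:ℝ) 1, z ≠ a →
      DifferentiableAt ℝ
        (fun z => ∑ n ∈ Finset.range (N + 1), c n * incBeta (1 - γ + n) (1 - δ) z) z ∧
      DifferentiableAt ℝ
        (deriv (fun z => ∑ n ∈ Finset.range (N + 1), c n * incBeta (1 - γ + n) (1 - δ) z)) z ∧
      deriv (deriv
          (fun z => ∑ n ∈ Finset.range (N + 1), c n * incBeta (1 - γ + n) (1 - δ) z)) z
        + (γ / z + δ / (z - 1) + ε / (z - a)) *
            deriv (fun z => ∑ n ∈ Finset.range (N + 1), c n * incBeta (1 - γ + n) (1 - δ) z) z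
        - q / (z * (z - 1) * (z - a)) *
            (∑ n ∈ Finset.range (N + 1), c n * incBeta (1 - γ + n) (1 - δ) z) = 0 := by
  intro z hz hza
  set P : ℝ[X] := ∑ n ∈ Finset.range (N + 1), C (c n) * X ^ n
  have hcoeff : ∀ n, P.coeff n = c n := by
    intro n
    simp only [P, finsetSum_coeff, coeff_C_mul_X_pow, Finset.sum_ite_eq, Finset.mem_range]
    split_ifs with hn
    · rfl
    · exact (hvanish n (by omega)).symm
  have hPQ := heun_polynomial_identity_of_coeff_recurrence (P := P)
    (by simpa only [hcoeff] using hrec)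
  have hu : ∀ t ∈ Ioo (0:ℝ) 1, ∑ n ∈ Finset.range (N + 1), c n * incBeta (1 - γ + n) (1 - δ) t
      = ∫ x in (0:ℝ)..t, betaWeight γ δ x * P.eval x :=
    fun t ht => sum_mul_incBeta_eq_integral_betaWeight_mul_eval hγ ht δ _ c
  refine heun_of_hasDerivAt_betaWeight_mul_eval (P := P) hz hza (fun t ht => ?_) ?_
  · exact (hasDerivAt_integral_betaWeight_mul_eval hγ ht δ P).congr_of_eventuallyEq
      (eventually_of_mem (isOpen_Ioo.mem_nhds ht) hu)
  · rw [hu z hz, ← integral_betaWeight_mul_eval_eq hγ hz δ hPQ,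
      ← intervalIntegral.integral_const_mul]
    simp only [eval_mul, eval_C, mul_left_comm]
end

section
/- Let γ, ε be real numbers with γ not a positive integer, and set a = −1, δ = −ε, q = (γ−1)ε. Let (a_n)_{n ≥ 0} be the real sequence with a_0 = 1 satisfying the three-term recurrence R_n a_n + Q_{n−1} a_{n−1} + P_{n−2} a_{n−2} = 0 for all n ≥ 1 (with a_{−1} = 0), where R_n = −n(n−γ), Q_n = −a·n(n+1−γ−δ) − (n+ε)(n+1−γ) − q, and P_n = (n+2−γ−δ)(n+ε). Then a_{2k+1} = 0 for all k ≥ 0, and a_{2k} = ( (ε/2)_k · (1 + (ε−γ)/2)_k ) / ( k! · (1 − γ/2)_k ) for all k ≥ 0, where (x)_k = x(x+1)···(x+k−1) denotes the ascending Pochhammer symbol. -/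
/-- Let `γ, ε` be real with `γ` not a positive integer, and set `a = −1`, `δ = −ε`,
`q = (γ−1)ε`.  Let `(c_n)` be the real sequence with `c_0 = 1` satisfying
`R_n c_n + Q_{n−1} c_{n−1} + P_{n−2} c_{n−2} = 0` for all `n ≥ 1` (with `c_{−1} = 0`),
where `R_n = −n(n−γ)`, `Q_n = −a n(n+1−γ−δ) − (n+ε)(n+1−γ) − q` and
`P_n = (n+2−γ−δ)(n+ε)`.  Then `c_{2k+1} = 0` for all `k`, and
`c_{2k} = (ε/2)_k (1+(ε−γ)/2)_k / (k! (1−γ/2)_k)` for all `k`, where `(x)_k` is the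
ascending Pochhammer symbol. -/
theorem heun_two_term_recurrence_coeffs (γ ε : ℝ)
    (hγ : ∀ m : ℕ, 0 < m → γ ≠ (m : ℝ))
    (a δ q : ℝ) (ha : a = -1) (hδ : δ = -ε) (hq : q = (γ - 1) * ε)
    (c : ℕ → ℝ) (h0 : c 0 = 1)
    (hrec : ∀ n : ℕ, 1 ≤ n →
      (-(n : ℝ) * ((n : ℝ) - γ)) * c n
        + (-a * ((n : ℝ) - 1) * ((n : ℝ) - γ - δ)
            - ((n : ℝ) - 1 + ε) * ((n : ℝ) - γ) - q) * c (n - 1)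
        + (if 2 ≤ n then (((n : ℝ) - γ - δ) * ((n : ℝ) - 2 + ε)) * c (n - 2) else 0) = 0) :
    (∀ k : ℕ, c (2 * k + 1) = 0) ∧
    (∀ k : ℕ, c (2 * k)
        = ((ascPochhammer ℝ k).eval (ε / 2) * (ascPochhammer ℝ k).eval (1 + (ε - γ) / 2))
            / ((k.factorial : ℝ) * (ascPochhammer ℝ k).eval (1 - γ / 2))) := by
  subst ha hδ hq
  -- The middle coefficient vanishes identically
  have hQ : ∀ n : ℕ, (-(-1:ℝ) * ((n : ℝ) - 1) * ((n : ℝ) - γ - (-ε))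
      - ((n : ℝ) - 1 + ε) * ((n : ℝ) - γ) - (γ - 1) * ε) = 0 := by
    intro n; ring
  have hrec' : ∀ n : ℕ, 2 ≤ n →
      (-(n : ℝ) * ((n : ℝ) - γ)) * c n
        + (((n : ℝ) - γ + ε) * ((n : ℝ) - 2 + ε)) * c (n - 2) = 0 := by
    intro n hn
    have := hrec n (le_trans one_le_two hn)
    rw [hQ, zero_mul, if_pos hn] at this
    have h2 : ((n : ℝ) - γ - (-ε)) = ((n : ℝ) - γ + ε) := by ring
    rw [h2] at this
    linarith
  have hne : ∀ n : ℕ, 1 ≤ n → (-(n : ℝ) * ((n : ℝ) - γ)) ≠ 0 := by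
    intro n hn
    have h1 : (n : ℝ) ≠ 0 := by positivity
    have h2 : (n : ℝ) - γ ≠ 0 := sub_ne_zero.2 (Ne.symm (hγ n hn))
    intro h; rcases mul_eq_zero.1 h with h | h
    · exact h1 (by linarith [neg_eq_zero.1 h])
    · exact h2 h
  have hodd : ∀ k : ℕ, c (2 * k + 1) = 0 := by
    intro k
    induction k with
    | zero =>
      have h := hrec 1 le_rfl
      simp only [Nat.cast_one] at h
      have hco : (- -1 * ((1:ℝ) - 1) * ((1:ℝ) - γ - -ε)
          - ((1:ℝ) - 1 + ε) * ((1:ℝ) - γ) - (γ - 1) * ε) = 0 := by ring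
      rw [hco, zero_mul, if_neg (by omega), add_zero, add_zero] at h
      have h1γ : (1:ℝ) - γ ≠ 0 := by
        have := hγ 1 one_pos; push_cast at this
        exact sub_ne_zero.2 (Ne.symm this)
      have := mul_eq_zero.1 h
      rcases this with h' | h'
      · exfalso; apply h1γ; nlinarith
      · simpa using h'
    | succ k ih =>
      have h2 : 2 ≤ 2 * (k+1) + 1 := by omega
      have := hrec' (2 * (k+1) + 1) h2
      have he : (2 * (k+1) + 1) - 2 = 2 * k + 1 := by omega
      rw [he, ih, mul_zero, add_zero] at this
      have := mul_eq_zero.1 this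
      rcases this with h | h
      · exact absurd h (hne _ (by omega))
      · exact h
  refine ⟨hodd, ?_⟩
  -- nonvanishing of denominators
  intro k
  induction k with
  | zero => simp [h0]
  | succ k ih =>
    have hn2 : 2 ≤ 2 * (k+1) := by omega
    have hE := hrec' (2 * (k+1)) hn2
    have he : (2 * (k+1)) - 2 = 2 * k := by omega
    rw [he] at hE
    have hcast : ((2 * (k+1) : ℕ) : ℝ) = 2 * (k:ℝ) + 2 := by push_cast; ring
    rw [hcast] at hE
    -- denominators
    have hfac : ((k.factorial : ℝ)) ≠ 0 := Nat.cast_ne_zero.2 k.factorial_ne_zero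
    have hP : ∀ m : ℕ, (ascPochhammer ℝ m).eval (1 - γ / 2) ≠ 0 := by
      intro m
      induction m with
      | zero => simp
      | succ m ihm =>
        rw [ascPochhammer_succ_eval]
        refine mul_ne_zero ihm ?_
        have : γ ≠ ((2*m+2 : ℕ) : ℝ) := hγ (2*m+2) (by omega)
        push_cast at this
        intro h; apply this; linarith
    have hk1 : ((k:ℝ) + 1) ≠ 0 := by positivity
    have hg : (1 - γ/2 + (k:ℝ)) ≠ 0 := by
      have : γ ≠ ((2*k+2 : ℕ) : ℝ) := hγ (2*k+2) (by omega)
      push_cast at this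
      intro h; apply this; linarith
    have hgg : (2 * (k:ℝ) + 2) - γ ≠ 0 := by
      have : γ ≠ ((2*k+2 : ℕ) : ℝ) := hγ (2*k+2) (by omega)
      push_cast at this
      intro h; apply this; linarith
    set A := (ascPochhammer ℝ k).eval (ε / 2) with hA
    set B := (ascPochhammer ℝ k).eval (1 + (ε - γ) / 2) with hB
    set P := (ascPochhammer ℝ k).eval (1 - γ / 2) with hPdef
    rw [ascPochhammer_succ_eval, ascPochhammer_succ_eval, ascPochhammer_succ_eval,
      Nat.factorial_succ]
    push_cast
    rw [← hA, ← hB, ← hPdef]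
    have hIH : c (2*k) * ((k.factorial : ℝ) * P) = A * B := by
      rw [ih, div_mul_cancel₀ _ (mul_ne_zero hfac (hP k))]
    have hDne : ((2*(k:ℝ)+2) * (2*(k:ℝ)+2 - γ)) ≠ 0 :=
      mul_ne_zero (by positivity) hgg
    have hc : c (2*(k+1)) = ((2*(k:ℝ)+2-γ+ε)*(2*(k:ℝ)+ε)) * c (2*k)
        / ((2*(k:ℝ)+2)*(2*(k:ℝ)+2-γ)) := by
      rw [eq_div_iff hDne]
      linear_combination -hE
    rw [eq_div_iff (mul_ne_zero (mul_ne_zero hk1 hfac) (mul_ne_zero (hP k) hg)), hc]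
    rw [div_mul_eq_mul_div, div_eq_iff hDne]
    linear_combination ((2*(k:ℝ)+2-γ+ε)*(2*(k:ℝ)+ε)*((k:ℝ)+1)*(1-γ/2+(k:ℝ))) * hIH
end

section
/- Let γ < 1 and ε be real numbers, and define F(x) = Σ_{k=0}^∞ [ (ε/2)_k (1 + (ε−γ)/2)_k / ( (1 − γ/2)_k k! ) ] x^k, where (x)_k is the ascending Pochhammer symbol (this series converges for |x| < 1). Then the function u(z) = ∫_0^z t^(−γ) (1−t)^ε F(t²) dt satisfies, for every z ∈ (0,1), the general Heun equation with a = −1, δ = −ε, q = (γ−1)ε and αβ = 0: u''(z) + ( γ/z − ε/(z−1) + ε/(z+1) ) u'(z) − (γ−1)ε/( z(z−1)(z+1) ) u(z) = 0. -/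
/-!
The series `F = ₂F₁(a, b; c)` converges on the unit disc and, comparing coefficients through
the recurrence `(n + 1)(c + n) Cₙ₊₁ = (a + n)(b + n) Cₙ`, satisfies Gauss's equation
`x(1 - x)F'' + (c - (a + b + 1)x)F' - abF = 0`. For `a = ε/2`, `b = 1 + (ε - γ)/2`,
`c = 1 - γ/2`, substituting `x = z²` in this equation shows that
`V(z) = z^(1-γ) (1-z)^(ε+1) (ε F(z²) + 2z(1+z) F'(z²))` satisfies `V' = (1 - γ) ε u'`
on `(0, 1)`. Since `γ < 1`, `V` extends continuously by `V(0) = 0 = u(0)`, hence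
`(1 - γ) ε u = V`. Multiplied by `z(z - 1)(z + 1)`, Heun's equation is then an algebraic
identity between `u''`, `u'` and `V`.
-/

open Set
open scoped Topology

section PowerSeries

open FormalMultilinearSeries

variable {𝕜 : Type*} [NontriviallyNormedField 𝕜] {c : ℕ → 𝕜} {x : 𝕜}

def derivCoeffs (c : ℕ → 𝕜) (n : ℕ) : 𝕜 := (n + 1) * c (n + 1)

lemma derivSeries_ofScalars_apply (c : ℕ → 𝕜) (n : ℕ) (x : 𝕜) :
    (ofScalars 𝕜 c).derivSeries n (fun _ => x) 1 = derivCoeffs c n * x ^ n := by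
  rw [apply_eq_pow_smul_coeff]
  simp only [_root_.smul_apply, derivSeries_coeff_one, coeff_ofScalars, nsmul_eq_mul,
    Nat.cast_add, Nat.cast_one, smul_eq_mul, derivCoeffs]
  ring

lemma hasSum_natCast_mul_mul_pow {s : 𝕜} (h : HasSum (fun n => derivCoeffs c n * x ^ n) s) :
    HasSum (fun n => n * c n * x ^ n) (x * s) := by
  rw [← hasSum_nat_add_iff' 1, Finset.sum_range_one, Nat.cast_zero, zero_mul, zero_mul, sub_zero]
  refine (h.mul_left x).congr_fun fun n => ?_
  simp only [derivCoeffs]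
  push_cast
  ring

lemma radius_le_radius_derivCoeffs :
    (ofScalars 𝕜 c).radius ≤ (ofScalars 𝕜 (derivCoeffs c)).radius := by
  refine (radius_le_radius_derivSeries _).trans (radius_le_of_le fun n => ?_)
  set q := (ofScalars 𝕜 c).derivSeries n
  calc ‖ofScalars 𝕜 (derivCoeffs c) n‖ = ‖q (fun _ => 1) 1‖ := by
        rw [ofScalars_norm, derivSeries_ofScalars_apply, one_pow, mul_one]
    _ ≤ ‖q (fun _ => 1)‖ := by simpa using (q fun _ => 1).le_opNorm 1
    _ ≤ ‖q‖ := by simpa using q.le_opNorm fun _ => 1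

variable [CompleteSpace 𝕜]

lemma hasSum_ofScalarsSum (hx : ‖x‖ₑ < (ofScalars 𝕜 c).radius) :
    HasSum (fun n => c n * x ^ n) (ofScalarsSum c x) := by
  have h := (ofScalars 𝕜 c).hasSum (x := x) (by simpa using hx)
  simp only [ofScalars_apply_eq, smul_eq_mul] at h
  exact h

lemma hasDerivAt_ofScalarsSum (hx : ‖x‖ₑ < (ofScalars 𝕜 c).radius) :
    HasDerivAt (ofScalarsSum c) (ofScalarsSum (derivCoeffs c) x) x := by
  have hsum := ((ofScalars 𝕜 c).derivSeries.hasSum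
    (x := x) (by simpa using hx.trans_le (radius_le_radius_derivSeries _))).mapL
    (ContinuousLinearMap.apply 𝕜 𝕜 (1 : 𝕜))
  simp only [ContinuousLinearMap.apply_apply, derivSeries_ofScalars_apply] at hsum
  rw [ofScalars_sum_eq]
  simp only [smul_eq_mul, hsum.tsum_eq]
  exact ((ofScalars 𝕜 c).hasFDerivAt_sum hx).hasDerivAt

lemma deriv_ofScalarsSum_eventuallyEq (hx : ‖x‖ₑ < (ofScalars 𝕜 c).radius) :
    deriv (ofScalarsSum c) =ᶠ[𝓝 x] ofScalarsSum (derivCoeffs c) := by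
  filter_upwards [(isOpen_lt continuous_enorm continuous_const).mem_nhds hx] with y hy
  exact (hasDerivAt_ofScalarsSum hy).deriv

end PowerSeries

section Hypergeometric

open FormalMultilinearSeries

variable {𝕂 : Type*} [RCLike 𝕂] {a b c : 𝕂}

lemma one_le_radius_ordinaryHypergeometricSeries (hc : ∀ k : ℕ, c ≠ -k) :
    1 ≤ (ordinaryHypergeometricSeries 𝕂 a b c).radius := by
  by_cases ha : ∃ k : ℕ, a = -k
  · obtain ⟨k, rfl⟩ := ha
    simp [ordinaryHypergeometric_radius_top_of_neg_nat₁]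
  by_cases hb : ∃ k : ℕ, b = -k
  · obtain ⟨k, rfl⟩ := hb
    simp [ordinaryHypergeometric_radius_top_of_neg_nat₂]
  push Not at ha hb
  rw [ordinaryHypergeometricSeries_radius_eq_one]
  intro k
  refine ⟨fun h => ha k ?_, fun h => hb k ?_, fun h => hc k ?_⟩ <;> simp [h]

lemma derivCoeffs_ordinaryHypergeometricCoefficient (hc : ∀ k : ℕ, c ≠ -k) (n : ℕ) :
    derivCoeffs (ordinaryHypergeometricCoefficient a b c) n * (c + n) =
      (a + n) * (b + n) * ordinaryHypergeometricCoefficient a b c n := by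
  have hcn : c + n ≠ 0 := fun h => hc n (eq_neg_of_add_eq_zero_left h)
  have hpoch : (ascPochhammer 𝕂 n).eval c ≠ 0 := by
    rw [Ne, ascPochhammer_eval_eq_zero_iff]
    rintro ⟨k, -, hk⟩
    exact hc k (neg_eq_iff_eq_neg.mp hk.symm)
  simp only [derivCoeffs, ordinaryHypergeometricCoefficient, ascPochhammer_succ_eval,
    Nat.factorial_succ]
  push_cast
  field_simp

lemma enorm_lt_radius_ordinaryHypergeometricSeries (hc : ∀ k : ℕ, c ≠ -k) {x : 𝕂}
    (hx : ‖x‖ < 1) : ‖x‖ₑ < (ordinaryHypergeometricSeries 𝕂 a b c).radius := by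
  rw [← ofReal_norm]
  exact (ENNReal.ofReal_lt_one.mpr hx).trans_le (one_le_radius_ordinaryHypergeometricSeries hc)

lemma analyticAt_ordinaryHypergeometric (hc : ∀ k : ℕ, c ≠ -k) {x : 𝕂} (hx : ‖x‖ < 1) :
    AnalyticAt 𝕂 (₂F₁ a b c) x := by
  have hr := enorm_lt_radius_ordinaryHypergeometricSeries (a := a) (b := b) hc hx
  refine ((ordinaryHypergeometricSeries 𝕂 a b c).hasFPowerSeriesOnBall
    (zero_le.trans_lt hr)).analyticAt_of_mem ?_
  rwa [Metric.mem_eball, edist_zero_right]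

theorem ordinaryHypergeometric_ode (hc : ∀ k : ℕ, c ≠ -k) {x : 𝕂} (hx : ‖x‖ < 1) :
    x * (1 - x) * deriv (deriv (₂F₁ a b c)) x + (c - (a + b + 1) * x) * deriv (₂F₁ a b c) x
      - a * b * ₂F₁ a b c x = 0 := by
  set C := ordinaryHypergeometricCoefficient a b c
  have hr : ‖x‖ₑ < (ofScalars 𝕂 C).radius :=
    enorm_lt_radius_ordinaryHypergeometricSeries hc hx
  have hC : ₂F₁ a b c = ofScalarsSum (E := 𝕂) C := rfl
  have hr' := hr.trans_le radius_le_radius_derivCoeffs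
  have hF : HasSum (fun n => C n * x ^ n) (₂F₁ a b c x) := hasSum_ofScalarsSum hr
  have hF' : HasSum (fun n => derivCoeffs C n * x ^ n) (deriv (₂F₁ a b c) x) := by
    rw [hC, (hasDerivAt_ofScalarsSum hr).deriv]
    exact hasSum_ofScalarsSum hr'
  have hF'' : HasSum (fun n => derivCoeffs (derivCoeffs C) n * x ^ n)
      (deriv (deriv (₂F₁ a b c)) x) := by
    rw [hC, (deriv_ofScalarsSum_eventuallyEq hr).deriv_eq, (hasDerivAt_ofScalarsSum hr').deriv]
    exact hasSum_ofScalarsSum (hr'.trans_le radius_le_radius_derivCoeffs)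
  have hEuler := hasSum_natCast_mul_mul_pow hF''
  -- `x(1 - x)F'' = xF'' - x (xF'')`, and `xF'' + (a + b + 1)F'` is the termwise derivative
  -- of the series with coefficients `(n + a + b) Cₙ`.
  have hA := hEuler.add (hF'.mul_left c)
  have hB := hasSum_natCast_mul_mul_pow (c := fun n => (n + a + b) * C n) (x := x)
    ((hEuler.add (hF'.mul_left (a + b + 1))).congr_fun fun n => by
      simp only [derivCoeffs]
      push_cast
      ring)
  have hzero := (hA.sub hB).sub (hF.mul_left (a * b))
  have hterms : ∀ n : ℕ, (n * derivCoeffs C n * x ^ n + c * (derivCoeffs C n * x ^ n))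
      - n * ((n + a + b) * C n) * x ^ n - a * b * (C n * x ^ n) = 0 := fun n => by
    linear_combination
      x ^ n * derivCoeffs_ordinaryHypergeometricCoefficient (a := a) (b := b) hc n
  simp only [hterms] at hzero
  linear_combination hzero.unique hasSum_zero

end Hypergeometric

section Heun

variable {γ ε z : ℝ} {F : ℝ → ℝ}

noncomputable def heunIntegrand (γ ε : ℝ) (F : ℝ → ℝ) (t : ℝ) : ℝ :=
  t ^ (-γ) * (1 - t) ^ ε * F (t ^ 2)

noncomputable def heunPrimitive (γ ε : ℝ) (F : ℝ → ℝ) (z : ℝ) : ℝ :=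
  z ^ (1 - γ) * (1 - z) ^ (ε + 1) * (ε * F (z ^ 2) + 2 * z * (1 + z) * deriv F (z ^ 2))

lemma hasDerivAt_heunIntegrand (hz0 : 0 < z) (hz1 : z < 1)
    (hF : DifferentiableAt ℝ F (z ^ 2)) :
    HasDerivAt (heunIntegrand γ ε F)
      (z ^ (-γ) * (1 - z) ^ ε * ((-γ / z - ε / (1 - z)) * F (z ^ 2) + 2 * z * deriv F (z ^ 2)))
      z := by
  have h1z : 1 - z ≠ 0 := by linarith
  have hpow := Real.hasDerivAt_rpow_const (p := -γ) (Or.inl hz0.ne')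
  have hbase := ((hasDerivAt_id z).const_sub 1).rpow_const (p := ε) (Or.inl h1z)
  have hcomp := hF.hasDerivAt.comp (h := fun t => t ^ 2) z (hasDerivAt_pow 2 z)
  refine ((hpow.mul hbase).mul hcomp).congr_deriv ?_
  simp only [id, Pi.mul_apply, Function.comp_apply]
  rw [Real.rpow_sub_one hz0.ne', Real.rpow_sub_one h1z]
  field_simp
  ring

lemma hasDerivAt_heunPrimitive (hz0 : 0 < z) (hz1 : z < 1) (hF : DifferentiableAt ℝ F (z ^ 2))
    (hF' : DifferentiableAt ℝ (deriv F) (z ^ 2))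
    (hode : z ^ 2 * (1 - z ^ 2) * deriv (deriv F) (z ^ 2)
      + (1 - γ / 2 - (ε / 2 + (1 + (ε - γ) / 2) + 1) * z ^ 2) * deriv F (z ^ 2)
      - ε / 2 * (1 + (ε - γ) / 2) * F (z ^ 2) = 0) :
    HasDerivAt (heunPrimitive γ ε F) ((1 - γ) * ε * heunIntegrand γ ε F z) z := by
  have h1z : 1 - z ≠ 0 := by linarith
  have hpow := Real.hasDerivAt_rpow_const (p := 1 - γ) (Or.inl hz0.ne')
  have hbase := ((hasDerivAt_id z).const_sub 1).rpow_const (p := ε + 1) (Or.inl h1z)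
  have hsq := hasDerivAt_pow 2 z
  have hF2 := hF.hasDerivAt.comp (h := fun t => t ^ 2) z hsq
  have hF'2 := hF'.hasDerivAt.comp (h := fun t => t ^ 2) z hsq
  have hK := (hF2.const_mul ε).add ((((hasDerivAt_id z).const_mul 2).mul
    ((hasDerivAt_id z).const_add 1)).mul hF'2)
  refine ((hpow.mul hbase).mul hK).congr_deriv ?_
  simp only [heunIntegrand, id, Pi.mul_apply, Pi.add_apply, Function.comp_apply]
  rw [show 1 - γ - 1 = -γ by ring, add_sub_cancel_right, Real.rpow_add_one h1z,
    show 1 - γ = -γ + 1 by ring, Real.rpow_add_one hz0.ne']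
  linear_combination 4 * z * z ^ (-γ) * (1 - z) ^ ε * hode

lemma continuousAt_comp_sq {t : ℝ} (hF : ContinuousOn F (Ioo (-1) 1))
    (ht : t ∈ Ioo (-1 : ℝ) 1) :
    ContinuousAt (fun x => F (x ^ 2)) t := by
  have ht2 : t ^ 2 ∈ Ioo (-1 : ℝ) 1 := by
    obtain ⟨h0, h1⟩ := ht
    constructor <;> nlinarith
  exact (hF.continuousAt (isOpen_Ioo.mem_nhds ht2)).comp (f := fun t => t ^ 2)
    (continuous_pow 2).continuousAt

lemma continuousAt_one_sub_rpow {t : ℝ} (ht : t < 1) :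
    ContinuousAt (fun x : ℝ => (1 - x) ^ ε) t :=
  (continuousAt_const.sub continuousAt_id).rpow_const (Or.inl (sub_ne_zero.mpr ht.ne'))

lemma continuousAt_heunIntegrand (hF : ContinuousOn F (Ioo (-1) 1)) (hz0 : 0 < z)
    (hz1 : z < 1) :
    ContinuousAt (heunIntegrand γ ε F) z :=
  ((Real.continuousAt_rpow_const _ _ (Or.inl hz0.ne')).mul (continuousAt_one_sub_rpow hz1)).mul
    (continuousAt_comp_sq hF ⟨by linarith, hz1⟩)

lemma intervalIntegrable_heunIntegrand (hγ : γ < 1) (hF : ContinuousOn F (Ioo (-1) 1))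
    (hz0 : 0 ≤ z) (hz1 : z < 1) :
    IntervalIntegrable (heunIntegrand γ ε F) MeasureTheory.volume 0 z := by
  have hcont : ContinuousOn (fun t => (1 - t) ^ ε * F (t ^ 2)) (uIcc 0 z) := by
    rw [uIcc_of_le hz0]
    intro t ht
    have ht1 : t < 1 := ht.2.trans_lt hz1
    exact ((continuousAt_one_sub_rpow ht1).mul
      (continuousAt_comp_sq hF ⟨by linarith [ht.1], ht1⟩)).continuousWithinAt
  have h := (intervalIntegral.intervalIntegrable_rpow' (a := 0) (b := z)
    (by linarith : -1 < -γ)).mul_continuousOn hcont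
  simp only [← mul_assoc] at h
  exact h

lemma hasDerivAt_integral_heunIntegrand (hγ : γ < 1) (hF : ContinuousOn F (Ioo (-1) 1))
    (hz0 : 0 < z) (hz1 : z < 1) :
    HasDerivAt (fun x => ∫ t in (0 : ℝ)..x, heunIntegrand γ ε F t)
      (heunIntegrand γ ε F z) z :=
  intervalIntegral.integral_hasDerivAt_right (intervalIntegrable_heunIntegrand hγ hF hz0.le hz1)
    (ContinuousOn.stronglyMeasurableAtFilter isOpen_Ioo
      (fun _ ht => (continuousAt_heunIntegrand hF ht.1 ht.2).continuousWithinAt) z ⟨hz0, hz1⟩)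
    (continuousAt_heunIntegrand hF hz0 hz1)

lemma continuousAt_heunPrimitive {t : ℝ} (hγ : γ < 1) (hF : ContinuousOn F (Ioo (-1) 1))
    (hF' : ContinuousOn (deriv F) (Ioo (-1) 1)) (ht : t ∈ Ioo (-1 : ℝ) 1) :
    ContinuousAt (heunPrimitive γ ε F) t := by
  have hK : ContinuousAt (fun x => ε * F (x ^ 2) + 2 * x * (1 + x) * deriv F (x ^ 2)) t :=
    (continuousAt_const.mul (continuousAt_comp_sq hF ht)).add
      (((continuousAt_const.mul continuousAt_id).mul
        (continuousAt_const.add continuousAt_id)).mul (continuousAt_comp_sq hF' ht))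
  exact ((Real.continuousAt_rpow_const _ _ (Or.inr (by linarith))).mul
    (continuousAt_one_sub_rpow ht.2)).mul hK

theorem integral_heunIntegrand (hγ : γ < 1) (hF : AnalyticOnNhd ℝ F (Ioo (-1) 1))
    (hode : ∀ x ∈ Ioo (0 : ℝ) 1, x * (1 - x) * deriv (deriv F) x
      + (1 - γ / 2 - (ε / 2 + (1 + (ε - γ) / 2) + 1) * x) * deriv F x
      - ε / 2 * (1 + (ε - γ) / 2) * F x = 0)
    (hz0 : 0 < z) (hz1 : z < 1) :
    (1 - γ) * ε * ∫ t in (0 : ℝ)..z, heunIntegrand γ ε F t = heunPrimitive γ ε F z := by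
  have hsq : ∀ x ∈ Ioo 0 z, x ^ 2 ∈ Ioo (0 : ℝ) 1 := fun x hx =>
    ⟨by nlinarith [hx.1], by nlinarith [hx.1, hx.2]⟩
  have hmem : ∀ x ∈ Ioo (0 : ℝ) 1, x ∈ Ioo (-1 : ℝ) 1 := fun x hx =>
    ⟨by linarith [hx.1], hx.2⟩
  have hderiv : ∀ x ∈ Ioo 0 z,
      HasDerivAt (heunPrimitive γ ε F) ((1 - γ) * ε * heunIntegrand γ ε F x) x := fun x hx =>
    hasDerivAt_heunPrimitive hx.1 (hx.2.trans hz1) (hF _ (hmem _ (hsq x hx))).differentiableAt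
      ((hF.deriv _ (hmem _ (hsq x hx))).differentiableAt) (hode _ (hsq x hx))
  have hcont : ContinuousOn (heunPrimitive γ ε F) (Icc 0 z) := fun t ht =>
    (continuousAt_heunPrimitive hγ hF.continuousOn hF.deriv.continuousOn
      ⟨by linarith [ht.1], ht.2.trans_lt hz1⟩).continuousWithinAt
  have hzero : heunPrimitive γ ε F 0 = 0 := by
    simp [heunPrimitive, Real.zero_rpow (by linarith : 1 - γ ≠ 0)]
  have hint := (intervalIntegrable_heunIntegrand (ε := ε) hγ hF.continuousOn hz0.le hz1).const_mul
    ((1 - γ) * ε)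
  rw [← intervalIntegral.integral_const_mul,
    intervalIntegral.integral_eq_sub_of_hasDerivAt_of_le hz0.le hcont hderiv hint, hzero, sub_zero]

lemma heun_equation_heunIntegrand (hz0 : 0 < z) (hz1 : z < 1)
    (hF : DifferentiableAt ℝ F (z ^ 2)) :
    deriv (heunIntegrand γ ε F) z
      + (γ / z - ε / (z - 1) + ε / (z + 1)) * heunIntegrand γ ε F z
      + heunPrimitive γ ε F z / (z * (z - 1) * (z + 1)) = 0 := by
  have h1z : 1 - z ≠ 0 := by linarith
  have hz1' : z - 1 ≠ 0 := by linarith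
  rw [(hasDerivAt_heunIntegrand hz0 hz1 hF).deriv]
  simp only [heunIntegrand, heunPrimitive]
  rw [Real.rpow_add_one h1z, show 1 - γ = -γ + 1 by ring, Real.rpow_add_one hz0.ne']
  field_simp
  ring

end Heun

/-- Let `γ < 1` and `ε` be real and
`F(x) = Σ_k (ε/2)_k (1+(ε−γ)/2)_k / ((1−γ/2)_k k!) x^k` (the Gauss hypergeometric
series `₂F₁(ε/2, 1+(ε−γ)/2; 1−γ/2; x)`).  Then the function
`u(z) = ∫_0^z t^(−γ)(1−t)^ε F(t²) dt` satisfies, for every `z ∈ (0,1)`, the general Heun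
equation with `a = −1`, `δ = −ε`, `q = (γ−1)ε` and `αβ = 0`:
`u'' + (γ/z − ε/(z−1) + ε/(z+1)) u' − (γ−1)ε/(z(z−1)(z+1)) u = 0`. -/
theorem heun_first_fundamental_solution (γ ε : ℝ) (hγ : γ < 1)
    (F : ℝ → ℝ)
    (hF : ∀ x : ℝ, F x = ∑' k : ℕ,
        ((ascPochhammer ℝ k).eval (ε / 2) * (ascPochhammer ℝ k).eval (1 + (ε - γ) / 2))
          / ((ascPochhammer ℝ k).eval (1 - γ / 2) * (k.factorial : ℝ)) * x ^ k)
    (u : ℝ → ℝ)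
    (hu : ∀ z : ℝ, u z = ∫ t in (0:ℝ)..z, t ^ (-γ) * (1 - t) ^ ε * F (t ^ 2)) :
    ∀ z ∈ Set.Ioo (0:ℝ) 1,
      DifferentiableAt ℝ u z ∧ DifferentiableAt ℝ (deriv u) z ∧
      deriv (deriv u) z + (γ / z - ε / (z - 1) + ε / (z + 1)) * deriv u z
        - (γ - 1) * ε / (z * (z - 1) * (z + 1)) * u z = 0 := by
  have hc : ∀ k : ℕ, (1 - γ / 2 : ℝ) ≠ -k := fun k h => by
    linarith [(k.cast_nonneg : (0 : ℝ) ≤ k)]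
  have hFeq : F = ₂F₁ (ε / 2) (1 + (ε - γ) / 2) (1 - γ / 2) := funext fun x => by
    rw [hF, ordinaryHypergeometric, ordinaryHypergeometric_sum_eq]
    exact tsum_congr fun k => by rw [smul_eq_mul]; ring
  have han : AnalyticOnNhd ℝ F (Ioo (-1) 1) := fun x hx =>
    hFeq ▸ analyticAt_ordinaryHypergeometric hc (by rwa [Real.norm_eq_abs, abs_lt])
  obtain rfl : u = fun z => ∫ t in (0 : ℝ)..z, heunIntegrand γ ε F t := funext hu
  intro z hz
  have hu' : ∀ y ∈ Ioo (0 : ℝ) 1, HasDerivAt (fun x => ∫ t in (0 : ℝ)..x, heunIntegrand γ ε F t)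
      (heunIntegrand γ ε F y) y := fun y hy =>
    hasDerivAt_integral_heunIntegrand hγ han.continuousOn hy.1 hy.2
  have hderiv := Filter.eventuallyEq_of_mem (isOpen_Ioo.mem_nhds hz) fun y hy =>
    (hu' y hy).deriv
  have hz2 := (han (z ^ 2) ⟨by nlinarith [hz.1], by nlinarith [hz.1, hz.2]⟩).differentiableAt
  have hg := hasDerivAt_heunIntegrand (γ := γ) (ε := ε) hz.1 hz.2 hz2
  refine ⟨(hu' z hz).differentiableAt, hderiv.differentiableAt_iff.mpr hg.differentiableAt, ?_⟩
  rw [hderiv.deriv_eq, (hu' z hz).deriv]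
  have hV := integral_heunIntegrand hγ han (fun x hx => hFeq ▸ ordinaryHypergeometric_ode hc
    (by rw [Real.norm_eq_abs, abs_lt]; constructor <;> linarith [hx.1, hx.2])) hz.1 hz.2
  linear_combination heun_equation_heunIntegrand hz.1 hz.2 hz2 + hV / (z * (z - 1) * (z + 1))
end
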